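/- arXiv:1804.11080 — 3 statements merged into one kernel-verified Lean document; each statement's English description precedes it below -/
import Mathlib

section
/- Let u(t,x) be a smooth solution of the Camassa-Holm equation ∂_t u − (1/4)∂_{txx}u + 3 u ∂_x u − (1/2)∂_x u ∂_{xx}u − (1/4) u ∂_{xxx}u = 0 on the circle. Define the vector field v on S¹ × ℝ_{>0} in polar coordinates (θ,r) by v_r = (1/2) r ∂_θ u(t,θ) and v_θ = r u(t,θ) (components in the orthonormal frame e_r = ∂_r, e_θ = (1/r)∂_θ). Then there exists a time-dependent pressure function P(t,θ,r) such that v satisfies the incompressible Euler momentum equations in polar coordinates: ∂_t v_r + v_r ∂_r v_r + (v_θ/r)∂_θ v_r − v_θ²/r = −∂_r P and ∂_t v_θ + v_r ∂_r v_θ + (v_θ/r)∂_θ v_θ + v_r v_θ/r = −(1/r)∂_θ P. -/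
open Real Function

/-- Partial derivative in time of a function of (time, space). -/
noncomputable def pdt (f : ℝ → ℝ → ℝ) (t x : ℝ) : ℝ := deriv (fun s => f s x) t
/-- Partial derivative in space of a function of (time, space). -/
noncomputable def pdx (f : ℝ → ℝ → ℝ) (t x : ℝ) : ℝ := deriv (fun y => f t y) x

/-- Partial derivatives of a function of (time, θ, r). -/
noncomputable def p1 (f : ℝ → ℝ → ℝ → ℝ) (t θ r : ℝ) : ℝ := deriv (fun s => f s θ r) t
noncomputable def p2 (f : ℝ → ℝ → ℝ → ℝ) (t θ r : ℝ) : ℝ := deriv (fun y => f t y r) θ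
noncomputable def p3 (f : ℝ → ℝ → ℝ → ℝ) (t θ r : ℝ) : ℝ := deriv (fun s => f t θ s) r

section infra
variable {f : ℝ → ℝ → ℝ}

lemma hasDerivAt_snd_slice (hf : ContDiff ℝ (⊤ : ℕ∞) (uncurry f)) (t x : ℝ) :
    HasDerivAt (fun y => f t y) (fderiv ℝ (uncurry f) (t, x) (0, 1)) x := by
  have h1 : HasFDerivAt (uncurry f) (fderiv ℝ (uncurry f) (t, x)) (t, x) :=
    (hf.differentiable (by simp) (t, x)).hasFDerivAt
  have h2 : HasDerivAt (fun y : ℝ => (t, y)) ((0 : ℝ), (1 : ℝ)) x :=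
    (hasDerivAt_const x t).prodMk (hasDerivAt_id x)
  exact h1.comp_hasDerivAt x h2

lemma hasDerivAt_fst_slice (hf : ContDiff ℝ (⊤ : ℕ∞) (uncurry f)) (t x : ℝ) :
    HasDerivAt (fun s => f s x) (fderiv ℝ (uncurry f) (t, x) (1, 0)) t := by
  have h1 : HasFDerivAt (uncurry f) (fderiv ℝ (uncurry f) (t, x)) (t, x) :=
    (hf.differentiable (by simp) (t, x)).hasFDerivAt
  have h2 : HasDerivAt (fun s : ℝ => (s, x)) ((1 : ℝ), (0 : ℝ)) t :=
    (hasDerivAt_id t).prodMk (hasDerivAt_const t x)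
  exact h1.comp_hasDerivAt t h2

lemma pdx_eq (hf : ContDiff ℝ (⊤ : ℕ∞) (uncurry f)) (t x : ℝ) :
    pdx f t x = fderiv ℝ (uncurry f) (t, x) (0, 1) :=
  (hasDerivAt_snd_slice hf t x).deriv

lemma pdt_eq (hf : ContDiff ℝ (⊤ : ℕ∞) (uncurry f)) (t x : ℝ) :
    pdt f t x = fderiv ℝ (uncurry f) (t, x) (1, 0) :=
  (hasDerivAt_fst_slice hf t x).deriv

lemma contDiff_pdx (hf : ContDiff ℝ (⊤ : ℕ∞) (uncurry f)) : ContDiff ℝ (⊤ : ℕ∞) (uncurry (pdx f)) := by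
  have h : uncurry (pdx f) = fun p : ℝ × ℝ => fderiv ℝ (uncurry f) p (0, 1) := by
    funext p; exact pdx_eq hf p.1 p.2
  rw [h]
  exact (ContinuousLinearMap.apply ℝ ℝ ((0:ℝ), (1:ℝ))).contDiff.comp (hf.fderiv_right (by simp))

lemma contDiff_pdt (hf : ContDiff ℝ (⊤ : ℕ∞) (uncurry f)) : ContDiff ℝ (⊤ : ℕ∞) (uncurry (pdt f)) := by
  have h : uncurry (pdt f) = fun p : ℝ × ℝ => fderiv ℝ (uncurry f) p (1, 0) := by
    funext p; exact pdt_eq hf p.1 p.2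
  rw [h]
  exact (ContinuousLinearMap.apply ℝ ℝ ((1:ℝ), (0:ℝ))).contDiff.comp (hf.fderiv_right (by simp))

lemma hasDerivAt_pdx (hf : ContDiff ℝ (⊤ : ℕ∞) (uncurry f)) (t x : ℝ) :
    HasDerivAt (fun y => f t y) (pdx f t x) x := by
  rw [pdx_eq hf]; exact hasDerivAt_snd_slice hf t x

lemma hasDerivAt_pdt (hf : ContDiff ℝ (⊤ : ℕ∞) (uncurry f)) (t x : ℝ) :
    HasDerivAt (fun s => f s x) (pdt f t x) t := by
  rw [pdt_eq hf]; exact hasDerivAt_fst_slice hf t x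

lemma pd_comm (hf : ContDiff ℝ (⊤ : ℕ∞) (uncurry f)) (t x : ℝ) :
    pdt (pdx f) t x = pdx (pdt f) t x := by
  have hF' : ContDiff ℝ (⊤ : ℕ∞) (fderiv ℝ (uncurry f)) := hf.fderiv_right (by simp)
  have key : ∀ v : ℝ × ℝ, HasDerivAt (fun s => fderiv ℝ (uncurry f) (s, x) v)
      (fderiv ℝ (fderiv ℝ (uncurry f)) (t, x) (1, 0) v) t := by
    intro v
    have h1 : HasFDerivAt (fderiv ℝ (uncurry f)) (fderiv ℝ (fderiv ℝ (uncurry f)) (t, x)) (t, x) :=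
      (hF'.differentiable (by simp) (t, x)).hasFDerivAt
    have h2 : HasDerivAt (fun s : ℝ => (s, x)) ((1 : ℝ), (0 : ℝ)) t :=
      (hasDerivAt_id t).prodMk (hasDerivAt_const t x)
    exact ((ContinuousLinearMap.apply ℝ ℝ v).hasFDerivAt.comp_hasDerivAt t (h1.comp_hasDerivAt t h2))
  have key2 : ∀ v : ℝ × ℝ, HasDerivAt (fun y => fderiv ℝ (uncurry f) (t, y) v)
      (fderiv ℝ (fderiv ℝ (uncurry f)) (t, x) (0, 1) v) x := by
    intro v
    have h1 : HasFDerivAt (fderiv ℝ (uncurry f)) (fderiv ℝ (fderiv ℝ (uncurry f)) (t, x)) (t, x) :=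
      (hF'.differentiable (by simp) (t, x)).hasFDerivAt
    have h2 : HasDerivAt (fun y : ℝ => (t, y)) ((0 : ℝ), (1 : ℝ)) x :=
      (hasDerivAt_const x t).prodMk (hasDerivAt_id x)
    exact ((ContinuousLinearMap.apply ℝ ℝ v).hasFDerivAt.comp_hasDerivAt x (h1.comp_hasDerivAt x h2))
  have symm : IsSymmSndFDerivAt ℝ (uncurry f) (t, x) :=
    hf.contDiffAt.isSymmSndFDerivAt (by rw [minSmoothness_of_isRCLikeNormedField]; exact WithTop.coe_le_coe.mpr le_top)
  have e1 : pdt (pdx f) t x = fderiv ℝ (fderiv ℝ (uncurry f)) (t, x) (1, 0) (0, 1) := by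
    have h : (fun s => pdx f s x) = fun s => fderiv ℝ (uncurry f) (s, x) (0, 1) := by
      funext s; exact pdx_eq hf s x
    unfold pdt; rw [h]; exact (key (0, 1)).deriv
  have e2 : pdx (pdt f) t x = fderiv ℝ (fderiv ℝ (uncurry f)) (t, x) (0, 1) (1, 0) := by
    have h : (fun y => pdt f t y) = fun y => fderiv ℝ (uncurry f) (t, y) (1, 0) := by
      funext y; exact pdt_eq hf t y
    unfold pdx; rw [h]; exact (key2 (1, 0)).deriv
  rw [e1, e2, symm.eq]

end infra

/-- a smooth (2π-periodic) solution of the Camassa-Holm equation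
lifts to a solution of the incompressible Euler momentum equations in polar
coordinates on `S¹ × ℝ_{>0}` via `v_r = (r/2)∂_θ u`, `v_θ = r u`. -/
theorem ch_embeds_in_euler (u : ℝ → ℝ → ℝ)
    (hu : ContDiff ℝ (⊤ : ℕ∞) (Function.uncurry u))
    (hper : ∀ t θ, u t (θ + 2 * π) = u t θ)
    (hCH : ∀ t θ, pdt u t θ - (1/4) * pdt (pdx (pdx u)) t θ
      + 3 * u t θ * pdx u t θ - (1/2) * pdx u t θ * pdx (pdx u) t θ
      - (1/4) * u t θ * pdx (pdx (pdx u)) t θ = 0) :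
    ∃ P : ℝ → ℝ → ℝ → ℝ,
      ∀ t θ r, 0 < r →
        (let vr : ℝ → ℝ → ℝ → ℝ := fun t θ r => r / 2 * pdx u t θ
         let vθ : ℝ → ℝ → ℝ → ℝ := fun t θ r => r * u t θ
         p1 vr t θ r + vr t θ r * p3 vr t θ r + vθ t θ r / r * p2 vr t θ r
            - (vθ t θ r)^2 / r = - p3 P t θ r ∧
         p1 vθ t θ r + vr t θ r * p3 vθ t θ r + vθ t θ r / r * p2 vθ t θ r
            + vr t θ r * vθ t θ r / r = - (1/r) * p2 P t θ r) := by
  have hu1 : ContDiff ℝ (⊤ : ℕ∞) (uncurry (pdx u)) := contDiff_pdx hu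
  have hu2 : ContDiff ℝ (⊤ : ℕ∞) (uncurry (pdx (pdx u))) := contDiff_pdx hu1
  have hut1 : ContDiff ℝ (⊤ : ℕ∞) (uncurry (pdt (pdx u))) := contDiff_pdt hu1
  refine ⟨fun t θ r => -(r^2/2) * ((1/2) * pdt (pdx u) t θ + (1/4) * (pdx u t θ)^2
      + (1/2) * u t θ * pdx (pdx u) t θ - (u t θ)^2), ?_⟩
  intro t θ r hr
  have hrne : r ≠ 0 := ne_of_gt hr
  refine ⟨?_, ?_⟩
  · -- radial equation
    have e1 : p1 (fun t θ r => r / 2 * pdx u t θ) t θ r = r / 2 * pdt (pdx u) t θ := by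
      unfold p1
      exact ((hasDerivAt_pdt hu1 t θ).const_mul (r / 2)).deriv
    have e2 : p3 (fun t θ r => r / 2 * pdx u t θ) t θ r = 1 / 2 * pdx u t θ := by
      unfold p3
      have h : HasDerivAt (fun s : ℝ => s / 2 * pdx u t θ) (1 / 2 * pdx u t θ) r := by
        simpa using ((hasDerivAt_id r).div_const 2).mul_const (pdx u t θ)
      exact h.deriv
    have e3 : p2 (fun t θ r => r / 2 * pdx u t θ) t θ r = r / 2 * pdx (pdx u) t θ := by
      unfold p2
      exact ((hasDerivAt_pdx hu1 t θ).const_mul (r / 2)).deriv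
    have eP : p3 (fun t θ r => -(r^2/2) * ((1/2) * pdt (pdx u) t θ + (1/4) * (pdx u t θ)^2
        + (1/2) * u t θ * pdx (pdx u) t θ - (u t θ)^2)) t θ r
        = -r * ((1/2) * pdt (pdx u) t θ + (1/4) * (pdx u t θ)^2
        + (1/2) * u t θ * pdx (pdx u) t θ - (u t θ)^2) := by
      unfold p3
      have h : HasDerivAt (fun s : ℝ => -(s^2/2) * ((1/2) * pdt (pdx u) t θ
          + (1/4) * (pdx u t θ)^2 + (1/2) * u t θ * pdx (pdx u) t θ - (u t θ)^2))
          (-r * ((1/2) * pdt (pdx u) t θ + (1/4) * (pdx u t θ)^2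
          + (1/2) * u t θ * pdx (pdx u) t θ - (u t θ)^2)) r := by
        have h0 := (((hasDerivAt_pow 2 r).div_const 2).neg).mul_const ((1/2) * pdt (pdx u) t θ
          + (1/4) * (pdx u t θ)^2 + (1/2) * u t θ * pdx (pdx u) t θ - (u t θ)^2)
        exact h0.congr_deriv (by ring)
      exact h.deriv
    rw [e1, e2, e3, eP]
    field_simp
    ring
  · -- angular equation
    have e4 : p1 (fun t θ r => r * u t θ) t θ r = r * pdt u t θ := by
      unfold p1
      exact ((hasDerivAt_pdt hu t θ).const_mul r).deriv
    have e5 : p3 (fun t θ r => r * u t θ) t θ r = u t θ := by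
      unfold p3
      simpa using ((hasDerivAt_id r).mul_const (u t θ)).deriv
    have e6 : p2 (fun t θ r => r * u t θ) t θ r = r * pdx u t θ := by
      unfold p2
      exact ((hasDerivAt_pdx hu t θ).const_mul r).deriv
    have hF : HasDerivAt (fun y => (1/2) * pdt (pdx u) t y + (1/4) * (pdx u t y)^2
        + (1/2) * u t y * pdx (pdx u) t y - (u t y)^2)
        ((1/2) * pdx (pdt (pdx u)) t θ
          + (1/4) * (2 * pdx u t θ ^ 1 * pdx (pdx u) t θ)
          + (((1/2) * pdx u t θ) * pdx (pdx u) t θ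
              + ((1/2) * u t θ) * pdx (pdx (pdx u)) t θ)
          - 2 * u t θ ^ 1 * pdx u t θ) θ := by
      exact ((((hasDerivAt_pdx hut1 t θ).const_mul (1/2)).add
        (((hasDerivAt_pdx hu1 t θ).pow 2).const_mul (1/4))).add
        (((hasDerivAt_pdx hu t θ).const_mul (1/2)).mul (hasDerivAt_pdx hu2 t θ))).sub
        ((hasDerivAt_pdx hu t θ).pow 2)
    have eP2 : p2 (fun t θ r => -(r^2/2) * ((1/2) * pdt (pdx u) t θ + (1/4) * (pdx u t θ)^2
        + (1/2) * u t θ * pdx (pdx u) t θ - (u t θ)^2)) t θ r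
        = -(r^2/2) * ((1/2) * pdx (pdt (pdx u)) t θ
          + (1/4) * (2 * pdx u t θ ^ 1 * pdx (pdx u) t θ)
          + (((1/2) * pdx u t θ) * pdx (pdx u) t θ
              + ((1/2) * u t θ) * pdx (pdx (pdx u)) t θ)
          - 2 * u t θ ^ 1 * pdx u t θ) := by
      unfold p2
      exact (hF.const_mul (-(r^2/2))).deriv
    rw [e4, e5, e6, eP2]
    have hCH' := hCH t θ
    rw [pd_comm hu1 t θ] at hCH'
    field_simp
    linear_combination 16 * hCH'
end

section
/- On S¹ × ℝ_{>0} with the cone metric r²(dθ)² + (dr)², let u(θ) be a smooth function on S¹ and let w be the vector field w(θ,r) = (u(θ), (r/2)∂_θ u(θ)) (components with respect to coordinates ∂_θ, ∂_r). Let w^♭ be the 1-form obtained from w via the cone metric. Then dw^♭ = 2r(u − (1/4)∂_{θθ}u) dr ∧ dθ, so the scalar vorticity of w, i.e. the function f with dw^♭ = f · r dr∧dθ, is f = 2(u − (1/4)∂_{θθ}u), which is independent of r. -/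
open Real

/-- on the cone `S¹ × ℝ_{>0}` with metric `r²(dθ)² + (dr)²`, the
lift `w(θ,r) = (u(θ), (r/2)∂_θu(θ))` has `w♭ = r²u dθ + (r/2)∂_θu dr`, and
`dw♭ = 2r (u − (1/4)∂_{θθ}u) dr∧dθ`; hence the scalar vorticity of `w` with
respect to the cone volume form `r dr∧dθ` is `2(u − (1/4)∂_{θθ}u)`,
independent of `r`. -/
theorem cone_lift_vorticity (u : ℝ → ℝ)
    (hu : ContDiff ℝ (⊤ : ℕ∞) u) (hper : ∀ θ, u (θ + 2 * π) = u θ) :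
    ∀ θ r : ℝ,
      -- dr∧dθ coefficient of d(w♭):  ∂_r(r²u) − ∂_θ((r/2)∂_θu)
      (deriv (fun s => s^2 * u θ) r - deriv (fun y => r/2 * deriv u y) θ
        = 2 * r * (u θ - (1/4) * deriv (deriv u) θ))
      ∧ (0 < r →
        (deriv (fun s => s^2 * u θ) r - deriv (fun y => r/2 * deriv u y) θ) / r
          = 2 * (u θ - (1/4) * deriv (deriv u) θ)) := by
  intro θ r
  have h1 : deriv (fun s : ℝ => s^2 * u θ) r = 2 * r * u θ := by
    simp [deriv_mul_const, deriv_pow]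
  have h2 : deriv (fun y => r/2 * deriv u y) θ = r/2 * deriv (deriv u) θ := by
    rw [deriv_const_mul]
    have hu' : ContDiff ℝ ((⊤ : ℕ∞) : WithTop ℕ∞) u := hu.of_le (by simp)
    exact (((contDiff_infty_iff_deriv.mp hu').2).differentiable (by simp) θ)
  have key : deriv (fun s : ℝ => s^2 * u θ) r - deriv (fun y => r/2 * deriv u y) θ
      = 2 * r * (u θ - (1/4) * deriv (deriv u) θ) := by
    rw [h1, h2]; ring
  exact ⟨key, fun hr => by rw [key]; field_simp⟩
end

section
/- On S¹ × ℝ_{>0} with the cone metric, let u(θ) be smooth on S¹, w(θ,r) = (u(θ), (r/2)∂_θ u(θ)), and n = u^♭ + (1/4) d δ u^♭ the CH momentum 1-form on S¹ (with u^♭ = u dθ, δu^♭ = −∂_θ u). Then dw^♭ = d(r² n), where w^♭ is the 1-form dual to w under the cone metric. -/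
open Real

/-- on the cone `S¹ × ℝ_{>0}` with metric `r²(dθ)² + (dr)²`, with
`w(θ,r) = (u(θ), (r/2)∂_θu(θ))`, `w♭ = r²u dθ + (r/2)∂_θu dr` and the CH
momentum 1-form `n = (u − (1/4)∂_{θθ}u) dθ`, one has `dw♭ = d(r²n)` (equality
of the `dr∧dθ` coefficients of the two 2-forms). -/
theorem cone_lift_vorticity_eq_momentum (u : ℝ → ℝ)
    (hu : ContDiff ℝ (⊤ : ℕ∞) u) (hper : ∀ θ, u (θ + 2 * π) = u θ) :
    ∀ θ r : ℝ,
      deriv (fun s => s^2 * u θ) r - deriv (fun y => r/2 * deriv u y) θ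
        = deriv (fun s => s^2 * (u θ - (1/4) * deriv (deriv u) θ)) r := by
  intro θ r
  have hdu : Differentiable ℝ (deriv u) :=
    (contDiff_infty_iff_deriv.mp (hu.of_le (by simp))).2.differentiable (by simp)
  have h1 : deriv (fun s : ℝ => s^2 * u θ) r = 2 * r * u θ := by
    simp [deriv_mul_const, mul_comm]
  have h2 : deriv (fun y => r/2 * deriv u y) θ = r/2 * deriv (deriv u) θ := by
    rw [deriv_const_mul _ (hdu θ)]
  have h3 : deriv (fun s : ℝ => s^2 * (u θ - (1/4) * deriv (deriv u) θ)) r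
      = 2 * r * (u θ - (1/4) * deriv (deriv u) θ) := by
    simp [deriv_mul_const, mul_comm]
  rw [h1, h2, h3]; ring
end
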